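/- arXiv:2309.05988 — 3 statements merged into one kernel-verified Lean document; each statement's English description precedes it below -/
import Mathlib

section
/- Let S be a separable metric space and (μ_n), (μ'_n) sequences of Borel probability measures on S converging weakly to μ and μ' respectively. Then the product measures μ_n × μ'_n converge weakly to μ × μ' on S × S. -/
open Filter MeasureTheory BoundedContinuousFunction

/-- Weak convergence of product measures: if `μₙ → μ` and `μ'ₙ → μ'` weakly on a
separable metric space `S`, then `μₙ × μ'ₙ → μ × μ'` weakly on `S × S`. -/
theorem prod_tendsto_of_tendsto
    {S : Type*} [MetricSpace S] [TopologicalSpace.SeparableSpace S]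
    [MeasurableSpace S] [BorelSpace S]
    (μn μ'n : ℕ → Measure S) (μ μ' : Measure S)
    [∀ n, IsProbabilityMeasure (μn n)] [∀ n, IsProbabilityMeasure (μ'n n)]
    [IsProbabilityMeasure μ] [IsProbabilityMeasure μ']
    (h1 : ∀ f : S →ᵇ ℝ, Tendsto (fun n => ∫ x, f x ∂(μn n)) atTop (nhds (∫ x, f x ∂μ)))
    (h2 : ∀ f : S →ᵇ ℝ, Tendsto (fun n => ∫ x, f x ∂(μ'n n)) atTop (nhds (∫ x, f x ∂μ'))) :
    ∀ g : S × S →ᵇ ℝ,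
      Tendsto (fun n => ∫ x, g x ∂((μn n).prod (μ'n n))) atTop
        (nhds (∫ x, g x ∂(μ.prod μ'))) := by
  let P : ℕ → ProbabilityMeasure S := fun n => ⟨μn n, inferInstance⟩
  let P' : ℕ → ProbabilityMeasure S := fun n => ⟨μ'n n, inferInstance⟩
  let Q : ProbabilityMeasure S := ⟨μ, inferInstance⟩
  let Q' : ProbabilityMeasure S := ⟨μ', inferInstance⟩
  have hP : Tendsto P atTop (nhds Q) :=
    ProbabilityMeasure.tendsto_iff_forall_integral_tendsto.mpr h1
  have hP' : Tendsto P' atTop (nhds Q') :=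
    ProbabilityMeasure.tendsto_iff_forall_integral_tendsto.mpr h2
  exact ProbabilityMeasure.tendsto_iff_forall_integral_tendsto.mp
    ((ProbabilityMeasure.continuous_prod.tendsto (Q, Q')).comp (hP.prodMk_nhds hP'))
end

section
/- Let S be a separable metric space, (m_n) a sequence of Borel probability measures on S converging weakly to m, and g : S → ℝ a bounded Borel function whose set of discontinuity points D(g) satisfies m(D(g)) = 0. Then ∫ g dm_n → ∫ g dm. -/
/-!
Shifting by a constant we may assume `0 ≤ g ≤ C`. The layer-cake formula writes
`∫ g dμ = ∫₀^C μ {g > t} dt`. The frontier of `{g > t}` lies in `{g = t} ∪ D(g)`, so it is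
`m`-null for all but countably many levels `t`, and for those levels the portmanteau theorem
gives `mₙ {g > t} → m {g > t}`. Dominated convergence on `[0, C]` finishes the proof.
-/

open Filter MeasureTheory BoundedContinuousFunction
open Set Topology

theorem frontier_setOf_lt_subset {X α : Type*} [TopologicalSpace X] [LinearOrder α]
    [TopologicalSpace α] [OrderClosedTopology α] (f : X → α) (t : α) :
    frontier {x | t < f x} ⊆ {x | f x = t} ∪ {x | ¬ ContinuousAt f x} := by
  intro x hx
  by_contra! hx'
  obtain ⟨hne, hcont⟩ : f x ≠ t ∧ ContinuousAt f x := by simpa [not_or] using hx'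
  rcases hne.lt_or_gt with hlt | hgt
  · have hnhds : {y | t < f y}ᶜ ∈ 𝓝 x :=
      mem_of_superset (hcont.preimage_mem_nhds (Iio_mem_nhds hlt))
        fun y (hy : f y < t) ↦ not_lt.2 hy.le
    have hx_int := mem_interior_iff_mem_nhds.2 hnhds
    rw [interior_compl] at hx_int
    exact hx_int hx.1
  · exact hx.2 (mem_interior_iff_mem_nhds.2 (hcont.preimage_mem_nhds (Ioi_mem_nhds hgt)))

theorem antitone_measureReal_setOf_lt {Ω : Type*} [MeasurableSpace Ω] (μ : Measure Ω)
    [IsFiniteMeasure μ] (f : Ω → ℝ) : Antitone fun t ↦ μ.real {x | t < f x} :=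
  fun _ _ hst ↦ measureReal_mono fun _ hx ↦ hst.trans_lt hx

theorem integral_eq_integral_Ioc_measureReal_lt {Ω : Type*} [MeasurableSpace Ω]
    {μ : Measure Ω} [IsFiniteMeasure μ] {f : Ω → ℝ} (hf : AEMeasurable f μ) (hf_nonneg : 0 ≤ f)
    {C : ℝ} (hf_le : ∀ x, f x ≤ C) :
    ∫ x, f x ∂μ = ∫ t in Ioc 0 C, μ.real {x | t < f x} := by
  have hint : Integrable f μ :=
    .of_bound hf.aestronglyMeasurable C <| ae_of_all _ fun x ↦ by
      simpa [Real.norm_eq_abs, abs_of_nonneg (hf_nonneg x)] using hf_le x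
  rw [hint.integral_eq_integral_meas_lt (ae_of_all _ hf_nonneg)]
  refine setIntegral_eq_of_subset_of_forall_sdiff_eq_zero measurableSet_Ioi
    Ioc_subset_Ioi_self fun t ht ↦ ?_
  have hCt : C < t := lt_of_not_ge fun h ↦ ht.2 ⟨ht.1, h⟩
  have hfx (x : Ω) : ¬ t < f x := not_lt.2 ((hf_le x).trans hCt.le)
  simp [hfx]

section WeakConvergence

variable {Ω ι : Type*} [MeasurableSpace Ω] [TopologicalSpace Ω] [OpensMeasurableSpace Ω]
  [HasOuterApproxClosed Ω] {L : Filter ι} {μs : ι → ProbabilityMeasure Ω}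
  {μ : ProbabilityMeasure Ω} {f : Ω → ℝ}

theorem countable_setOf_not_tendsto_measureReal_setOf_lt (hμs : Tendsto μs L (𝓝 μ))
    (hf : Measurable f) (hf_cont : (μ : Measure Ω) {x | ¬ ContinuousAt f x} = 0) :
    {t : ℝ | ¬ Tendsto (fun i ↦ (μs i : Measure Ω).real {x | t < f x}) L
      (𝓝 ((μ : Measure Ω).real {x | t < f x}))}.Countable := by
  refine (Measure.countable_meas_level_set_pos (μ := (μ : Measure Ω)) hf).mono fun t ht ↦ ?_
  by_contra hlevel
  have hlevel_null : (μ : Measure Ω) {x | f x = t} = 0 := by simpa using hlevel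
  have hfrontier : (μ : Measure Ω) (frontier {x | t < f x}) = 0 :=
    measure_mono_null (frontier_setOf_lt_subset f t) <|
      measure_union_null hlevel_null hf_cont
  exact ht <| (ENNReal.tendsto_toReal (measure_ne_top _ _)).comp
    (ProbabilityMeasure.tendsto_measure_of_null_frontier_of_tendsto' hμs hfrontier)

theorem tendsto_integral_of_ae_continuous_of_nonneg [L.IsCountablyGenerated]
    (hμs : Tendsto μs L (𝓝 μ)) (hf : Measurable f) (hf_nonneg : 0 ≤ f) {C : ℝ}
    (hf_le : ∀ x, f x ≤ C) (hf_cont : (μ : Measure Ω) {x | ¬ ContinuousAt f x} = 0) :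
    Tendsto (fun i ↦ ∫ x, f x ∂(μs i : Measure Ω)) L (𝓝 (∫ x, f x ∂(μ : Measure Ω))) := by
  simp_rw [integral_eq_integral_Ioc_measureReal_lt hf.aemeasurable hf_nonneg hf_le]
  refine tendsto_integral_filter_of_norm_le_const
    (.of_forall fun i ↦ (antitone_measureReal_setOf_lt _ f).measurable.aestronglyMeasurable)
    ⟨1, .of_forall fun i ↦ ae_of_all _ fun t ↦ ?_⟩ ?_
  · simp
  · filter_upwards [ae_restrict_of_ae <| measure_eq_zero_iff_ae_notMem.1 <|
      (countable_setOf_not_tendsto_measureReal_setOf_lt hμs hf hf_cont).measure_zero volume]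
      with t ht using not_not.1 ht

theorem tendsto_integral_of_ae_continuous_of_abs_le [L.IsCountablyGenerated]
    (hμs : Tendsto μs L (𝓝 μ)) (hf : Measurable f) {C : ℝ} (hf_le : ∀ x, |f x| ≤ C)
    (hf_cont : (μ : Measure Ω) {x | ¬ ContinuousAt f x} = 0) :
    Tendsto (fun i ↦ ∫ x, f x ∂(μs i : Measure Ω)) L (𝓝 (∫ x, f x ∂(μ : Measure Ω))) := by
  have hcont_shift : (μ : Measure Ω) {x | ¬ ContinuousAt (fun y ↦ f y + C) x} = 0 := by
    convert hf_cont using 4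
    exact not_congr ((Homeomorph.addRight C).comp_continuousAt_iff f _)
  have hshift := tendsto_integral_of_ae_continuous_of_nonneg hμs (hf.add_const C)
    (fun x ↦ neg_le_iff_add_nonneg.1 (abs_le.1 (hf_le x)).1)
    (fun x ↦ add_le_add_left (abs_le.1 (hf_le x)).2 C) hcont_shift
  have hint (ν : ProbabilityMeasure Ω) : Integrable f (ν : Measure Ω) :=
    .of_bound hf.aestronglyMeasurable C (ae_of_all _ hf_le)
  simp only [integral_add (hint _) (integrable_const C), integral_const, probReal_univ,
    one_smul] at hshift
  simpa using hshift.sub_const C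

end WeakConvergence

theorem integral_tendsto_of_ae_continuous_general
    {S : Type*} [MetricSpace S]
    [MeasurableSpace S] [BorelSpace S]
    (mn : ℕ → Measure S) (m : Measure S)
    [∀ n, IsProbabilityMeasure (mn n)] [IsProbabilityMeasure m]
    (hweak : ∀ f : S →ᵇ ℝ, Tendsto (fun n => ∫ x, f x ∂(mn n)) atTop (nhds (∫ x, f x ∂m)))
    (g : S → ℝ) (hmeas : Measurable g) (hbdd : ∃ C, ∀ x, |g x| ≤ C)
    (hcont : m {x | ¬ ContinuousAt g x} = 0) :
    Tendsto (fun n => ∫ x, g x ∂(mn n)) atTop (nhds (∫ x, g x ∂m)) := by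
  obtain ⟨C, hC⟩ := hbdd
  let μs : ℕ → ProbabilityMeasure S := fun n ↦ ⟨mn n, inferInstance⟩
  let μ : ProbabilityMeasure S := ⟨m, inferInstance⟩
  exact tendsto_integral_of_ae_continuous_of_abs_le (μs := μs) (μ := μ)
    (ProbabilityMeasure.tendsto_iff_forall_integral_tendsto.2 hweak) hmeas hC hcont

/-- Portmanteau-type theorem: if `mₙ → m` weakly and `g` is bounded, Borel and
`m`-almost everywhere continuous, then `∫ g dmₙ → ∫ g dm`. -/
theorem integral_tendsto_of_ae_continuous
    {S : Type*} [MetricSpace S] [TopologicalSpace.SeparableSpace S]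
    [MeasurableSpace S] [BorelSpace S]
    (mn : ℕ → Measure S) (m : Measure S)
    [∀ n, IsProbabilityMeasure (mn n)] [IsProbabilityMeasure m]
    (hweak : ∀ f : S →ᵇ ℝ, Tendsto (fun n => ∫ x, f x ∂(mn n)) atTop (nhds (∫ x, f x ∂m)))
    (g : S → ℝ) (hmeas : Measurable g) (hbdd : ∃ C, ∀ x, |g x| ≤ C)
    (hcont : m {x | ¬ ContinuousAt g x} = 0) :
    Tendsto (fun n => ∫ x, g x ∂(mn n)) atTop (nhds (∫ x, g x ∂m)) :=
  integral_tendsto_of_ae_continuous_general mn m hweak g hmeas hbdd hcont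
end

section
/- If (Y_j)_{j≥1} and (Y'_j)_{j≥1} are two families of random variables such that (Y_j) is independent of (Y'_j) (as sequences) and both families {|Y_j|} and {|Y'_j|} are uniformly integrable, then the family {|Y_j Y'_j|}_{j≥1} is uniformly integrable. -/
/-!
On `{a * b < |f g|}` one has `a < |f|` or `b < |g|`. Over `{a < |f|}` independence factors the
integral of `|f g|` as the tail integral of `|f|` times `𝔼|g|`, and symmetrically over `{b < |g|}`.
Uniform integrability bounds the tails uniformly and, through them, the first moments, so both
products become small uniformly in the index.
-/

open MeasureTheory ProbabilityTheory

section

variable {Ω : Type*} {Mf Mg mΩ : MeasurableSpace Ω} {μ : Measure Ω}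

def TailUnifIntegrable {ι : Type*} (Z : ι → Ω → ℝ) (μ : Measure Ω) : Prop :=
  ∀ ε > 0, ∃ K : ℝ, ∀ j, ∫⁻ ω in {ω | K < |Z j ω|}, ENNReal.ofReal |Z j ω| ∂μ ≤ ENNReal.ofReal ε

lemma setOf_lt_abs_mul_subset (f g : Ω → ℝ) (a b : ℝ) :
    {ω | a * b < |f ω * g ω|} ⊆ {ω | a < |f ω|} ∪ {ω | b < |g ω|} := by
  intro ω hω
  by_contra hout
  simp only [Set.mem_union, Set.mem_ofPred_eq, not_or, not_lt] at hω hout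
  have hfg : |f ω * g ω| ≤ a * b := by
    rw [abs_mul]
    exact mul_le_mul hout.1 hout.2 (abs_nonneg _) ((abs_nonneg _).trans hout.1)
  exact hω.not_ge hfg

lemma lintegral_ofReal_abs_le_setLIntegral_add {Z : Ω → ℝ} (hZ : Measurable Z) (K : ℝ) :
    ∫⁻ ω, ENNReal.ofReal |Z ω| ∂μ
      ≤ ∫⁻ ω in {ω | K < |Z ω|}, ENNReal.ofReal |Z ω| ∂μ + ENNReal.ofReal K * μ Set.univ := by
  have hs : MeasurableSet {ω | K < |Z ω|} := hZ.abs measurableSet_Ioi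
  rw [← lintegral_add_compl _ hs]
  gcongr
  calc ∫⁻ ω in {ω | K < |Z ω|}ᶜ, ENNReal.ofReal |Z ω| ∂μ
      ≤ ∫⁻ _ in {ω | K < |Z ω|}ᶜ, ENNReal.ofReal K ∂μ :=
        setLIntegral_mono measurable_const fun ω hω => ENNReal.ofReal_le_ofReal (not_lt.1 hω)
    _ ≤ ENNReal.ofReal K * μ Set.univ := by
        rw [setLIntegral_const]
        gcongr
        exact Set.subset_univ _

lemma TailUnifIntegrable.exists_lintegral_le [IsProbabilityMeasure μ] {ι : Type*}
    {Z : ι → Ω → ℝ} (hZ : ∀ j, Measurable (Z j)) (hUI : TailUnifIntegrable Z μ) :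
    ∃ C > 0, ∀ j, ∫⁻ ω, ENNReal.ofReal |Z j ω| ∂μ ≤ ENNReal.ofReal C := by
  obtain ⟨K, hK⟩ := hUI 1 one_pos
  refine ⟨1 + |K|, by positivity, fun j => ?_⟩
  calc ∫⁻ ω, ENNReal.ofReal |Z j ω| ∂μ
      ≤ ∫⁻ ω in {ω | K < |Z j ω|}, ENNReal.ofReal |Z j ω| ∂μ + ENNReal.ofReal K * μ Set.univ :=
        lintegral_ofReal_abs_le_setLIntegral_add (hZ j) K
    _ ≤ ENNReal.ofReal 1 + ENNReal.ofReal |K| := by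
        rw [measure_univ, mul_one]
        gcongr
        exacts [hK j, le_abs_self K]
    _ = ENNReal.ofReal (1 + |K|) := (ENNReal.ofReal_add zero_le_one (abs_nonneg K)).symm

lemma setLIntegral_mul_eq_of_indep (hMf : Mf ≤ mΩ) (hMg : Mg ≤ mΩ) (hind : Indep Mf Mg μ)
    {f g : Ω → ENNReal} (hf : Measurable[Mf] f) (hg : Measurable[Mg] g) {s : Set Ω}
    (hs : MeasurableSet[Mf] s) :
    ∫⁻ ω in s, f ω * g ω ∂μ = (∫⁻ ω in s, f ω ∂μ) * ∫⁻ ω, g ω ∂μ := by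
  rw [← lintegral_indicator (hMf _ hs), ← lintegral_indicator (hMf _ hs)]
  simp_rw [Set.indicator_mul_left]
  exact lintegral_mul_eq_lintegral_mul_lintegral_of_independent_measurableSpace hMf hMg hind
    (hf.indicator hs) hg

lemma setLIntegral_lt_abs_mul_le_of_indep (hMf : Mf ≤ mΩ) (hMg : Mg ≤ mΩ)
    (hind : Indep Mf Mg μ) {f g : Ω → ℝ} (hf : Measurable[Mf] f) (hg : Measurable[Mg] g)
    (a b : ℝ) :
    ∫⁻ ω in {ω | a * b < |f ω * g ω|}, ENNReal.ofReal |f ω * g ω| ∂μ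
      ≤ (∫⁻ ω in {ω | a < |f ω|}, ENNReal.ofReal |f ω| ∂μ) * ∫⁻ ω, ENNReal.ofReal |g ω| ∂μ
        + (∫⁻ ω in {ω | b < |g ω|}, ENNReal.ofReal |g ω| ∂μ) * ∫⁻ ω, ENNReal.ofReal |f ω| ∂μ := by
  have hf' : Measurable[Mf] fun ω => ENNReal.ofReal |f ω| :=
    (ENNReal.measurable_ofReal.comp measurable_abs).comp hf
  have hg' : Measurable[Mg] fun ω => ENNReal.ofReal |g ω| :=
    (ENNReal.measurable_ofReal.comp measurable_abs).comp hg
  have hfs : MeasurableSet[Mf] {ω | a < |f ω|} := hf (measurable_abs measurableSet_Ioi)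
  have hgs : MeasurableSet[Mg] {ω | b < |g ω|} := hg (measurable_abs measurableSet_Ioi)
  have hsplit : ∀ ω, ENNReal.ofReal |f ω * g ω| = ENNReal.ofReal |f ω| * ENNReal.ofReal |g ω| :=
    fun ω => by rw [abs_mul, ENNReal.ofReal_mul (abs_nonneg _)]
  calc ∫⁻ ω in {ω | a * b < |f ω * g ω|}, ENNReal.ofReal |f ω * g ω| ∂μ
      ≤ ∫⁻ ω in {ω | a < |f ω|} ∪ {ω | b < |g ω|}, ENNReal.ofReal |f ω * g ω| ∂μ :=
        lintegral_mono_set (setOf_lt_abs_mul_subset f g a b)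
    _ ≤ (∫⁻ ω in {ω | a < |f ω|}, ENNReal.ofReal |f ω| * ENNReal.ofReal |g ω| ∂μ)
        + ∫⁻ ω in {ω | b < |g ω|}, ENNReal.ofReal |g ω| * ENNReal.ofReal |f ω| ∂μ := by
        simp_rw [hsplit, mul_comm (ENNReal.ofReal |g _|)]
        exact lintegral_union_le _ _ _
    _ = _ := by
        rw [setLIntegral_mul_eq_of_indep hMf hMg hind hf' hg' hfs,
          setLIntegral_mul_eq_of_indep hMg hMf hind.symm hg' hf' hgs]

lemma TailUnifIntegrable.mul_of_indep [IsProbabilityMeasure μ] {ι : Type*} {Y Y' : ι → Ω → ℝ}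
    (hMf : Mf ≤ mΩ) (hMg : Mg ≤ mΩ) (hind : Indep Mf Mg μ) (hY : ∀ j, Measurable[Mf] (Y j))
    (hY' : ∀ j, Measurable[Mg] (Y' j)) (hUI : TailUnifIntegrable Y μ)
    (hUI' : TailUnifIntegrable Y' μ) :
    TailUnifIntegrable (fun j ω => Y j ω * Y' j ω) μ := by
  obtain ⟨C, hC, hCY⟩ := hUI.exists_lintegral_le fun j => (hY j).mono hMf le_rfl
  obtain ⟨C', hC', hCY'⟩ := hUI'.exists_lintegral_le fun j => (hY' j).mono hMg le_rfl
  have hhalf : ∀ c > 0, ∀ ε > 0, ENNReal.ofReal (ε / (2 * c)) * ENNReal.ofReal c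
      = ENNReal.ofReal (ε / 2) := fun c hc ε hε => by
    rw [← ENNReal.ofReal_mul (by positivity)]
    congr 1
    field_simp
  intro ε hε
  -- the tail of each factor is made small enough to absorb the first moment of the other
  obtain ⟨a, ha⟩ := hUI _ (div_pos hε (mul_pos two_pos hC'))
  obtain ⟨b, hb⟩ := hUI' _ (div_pos hε (mul_pos two_pos hC))
  refine ⟨a * b, fun j => ?_⟩
  calc _ ≤ _ := setLIntegral_lt_abs_mul_le_of_indep hMf hMg hind (hY j) (hY' j) a b
    _ ≤ ENNReal.ofReal (ε / (2 * C')) * ENNReal.ofReal C'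
        + ENNReal.ofReal (ε / (2 * C)) * ENNReal.ofReal C := by
        gcongr
        exacts [ha j, hCY' j, hb j, hCY j]
    _ = ENNReal.ofReal ε := by
        rw [hhalf C' hC' ε hε, hhalf C hC ε hε, ← ENNReal.ofReal_add (by positivity)
          (by positivity), add_halves]

end

theorem unifIntegrable_prod_of_indep_general
    {Ω : Type*} [m0 : MeasurableSpace Ω] {μ : Measure Ω} [IsProbabilityMeasure μ]
    (Y Y' : ℕ → Ω → ℝ)
    (hYmeas : ∀ j, Measurable (Y j)) (hY'meas : ∀ j, Measurable (Y' j))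
    (hindep : Indep (⨆ j, MeasurableSpace.comap (Y j) inferInstance)
                    (⨆ j, MeasurableSpace.comap (Y' j) inferInstance) μ)
    (hYUI : ∀ ε > 0, ∃ K : ℝ, ∀ j,
      ∫⁻ ω in {ω | K < |Y j ω|}, ENNReal.ofReal |Y j ω| ∂μ ≤ ENNReal.ofReal ε)
    (hY'UI : ∀ ε > 0, ∃ K : ℝ, ∀ j,
      ∫⁻ ω in {ω | K < |Y' j ω|}, ENNReal.ofReal |Y' j ω| ∂μ ≤ ENNReal.ofReal ε) :
    ∀ ε > 0, ∃ K : ℝ, ∀ j,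
      ∫⁻ ω in {ω | K < |Y j ω * Y' j ω|}, ENNReal.ofReal |Y j ω * Y' j ω| ∂μ
        ≤ ENNReal.ofReal ε :=
  TailUnifIntegrable.mul_of_indep
    (iSup_le fun j => (hYmeas j).comap_le) (iSup_le fun j => (hY'meas j).comap_le) hindep
    (fun j => measurable_iff_comap_le.2 (le_iSup (fun j => MeasurableSpace.comap (Y j) _) j))
    (fun j => measurable_iff_comap_le.2 (le_iSup (fun j => MeasurableSpace.comap (Y' j) _) j))
    hYUI hY'UI

/-- If the sequence `(Y_j)` is independent of `(Y'_j)` and both families are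
uniformly integrable, then the family of products `(Y_j Y'_j)` is uniformly
integrable. -/
theorem unifIntegrable_prod_of_indep
    {Ω : Type*} [m0 : MeasurableSpace Ω] {μ : Measure Ω} [IsProbabilityMeasure μ]
    (Y Y' : ℕ → Ω → ℝ)
    (hYmeas : ∀ j, Measurable (Y j)) (hY'meas : ∀ j, Measurable (Y' j))
    (hYint : ∀ j, Integrable (Y j) μ) (hY'int : ∀ j, Integrable (Y' j) μ)
    (hindep : Indep (⨆ j, MeasurableSpace.comap (Y j) inferInstance)
                    (⨆ j, MeasurableSpace.comap (Y' j) inferInstance) μ)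
    (hYUI : ∀ ε > 0, ∃ K : ℝ, ∀ j,
      ∫⁻ ω in {ω | K < |Y j ω|}, ENNReal.ofReal |Y j ω| ∂μ ≤ ENNReal.ofReal ε)
    (hY'UI : ∀ ε > 0, ∃ K : ℝ, ∀ j,
      ∫⁻ ω in {ω | K < |Y' j ω|}, ENNReal.ofReal |Y' j ω| ∂μ ≤ ENNReal.ofReal ε) :
    ∀ ε > 0, ∃ K : ℝ, ∀ j,
      ∫⁻ ω in {ω | K < |Y j ω * Y' j ω|}, ENNReal.ofReal |Y j ω * Y' j ω| ∂μ
        ≤ ENNReal.ofReal ε :=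
  unifIntegrable_prod_of_indep_general (m0 := m0) Y Y' hYmeas hY'meas hindep hYUI hY'UI
end
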